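/- Let k ∈ ℕ and let E_k = ⋃_{j=0}^{2^{k+1}−1} ( 2j·2^{−(k+2)}, (2j+1)·2^{−(k+2)} ) ⊆ [0,1]. Then for every dyadic interval I ⊆ [0,1] with 2^{−(k+1)} ≤ λ(I) ≤ 1, one has λ(E_k ∩ I) = (1/2)·λ(I). -/
import Mathlib


open MeasureTheory
open scoped ENNReal

noncomputable section

/-- The set `E_k ⊆ [0,1]`: the union of `2^(k+1)` open intervals of length `2^{-(k+2)}`,
each separated by a gap of length `2^{-(k+2)}`. -/
def Ek (k : ℕ) : Set ℝ :=
  ⋃ j ∈ Finset.range (2 ^ (k + 1)),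
    Set.Ioo ((2 * (j : ℝ)) * 2 ^ (-(k + 2 : ℤ))) ((2 * (j : ℝ) + 1) * 2 ^ (-(k + 2 : ℤ)))

/-- For every dyadic interval `I = [a·2^{-m}, (a+1)·2^{-m}) ⊆ [0,1]` with
`2^{-(k+1)} ≤ λ(I) ≤ 1`, one has `λ(E_k ∩ I) = λ(I)/2`. -/
theorem Ek_inter_dyadic_interval (k m a : ℕ) (ha : a < 2 ^ m)
    (I : Set ℝ) (hI : I = Set.Ico ((a : ℝ) * 2 ^ (-(m : ℤ))) (((a : ℝ) + 1) * 2 ^ (-(m : ℤ))))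
    (hlow : ENNReal.ofReal ((2 : ℝ) ^ (-(k + 1 : ℤ))) ≤ volume I)
    (hhigh : volume I ≤ 1) :
    volume (Ek k ∩ I) = volume I / 2 := by
  set c : ℝ := 2 ^ (-(k + 2 : ℤ)) with hc
  have hcpos : (0:ℝ) < c := by positivity
  have hvolI : volume I = ENNReal.ofReal ((2:ℝ) ^ (-(m:ℤ))) := by
    rw [hI, Real.volume_Ico]
    congr 1
    ring
  -- m ≤ k+1
  have hm : m ≤ k + 1 := by
    by_contra h
    push_neg at h
    rw [hvolI] at hlow
    have h1 : (2:ℝ) ^ (-(k + 1 : ℤ)) ≤ 2 ^ (-(m:ℤ)) :=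
      (ENNReal.ofReal_le_ofReal_iff (by positivity)).mp hlow
    have h2 : (2:ℝ) ^ (-(m:ℤ)) < 2 ^ (-(k + 1 : ℤ)) := by
      apply zpow_lt_zpow_right₀ one_lt_two
      omega
    linarith
  set n : ℕ := k + 1 - m with hn
  have hmn : m + n = k + 1 := by omega
  set b : ℕ := a * 2 ^ n with hb
  -- key real identity
  have key : (2:ℝ) ^ (-(m:ℤ)) = 2 ^ (n+1) * c := by
    have : (2:ℝ) ^ (n+1) = (2:ℝ) ^ ((n:ℤ)+1) := by
      norm_cast
    rw [this, hc, ← zpow_add₀ (two_ne_zero)]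
    congr 1
    omega
  -- the per-j interval
  set S : ℕ → Set ℝ := fun j => Set.Ioo ((2 * (j : ℝ)) * c) ((2 * (j : ℝ) + 1) * c) with hS
  -- inclusion of index sets
  have hsub : Finset.Ico b (b + 2^n) ⊆ Finset.range (2 ^ (k + 1)) := by
    intro j hj
    simp only [Finset.mem_Ico] at hj
    simp only [Finset.mem_range]
    have : b + 2^n ≤ 2 ^ (k+1) := by
      have : (a+1) * 2^n ≤ 2^m * 2^n := Nat.mul_le_mul_right _ (by omega)
      calc b + 2^n = (a+1) * 2^n := by ring
        _ ≤ 2^m * 2^n := this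
        _ = 2^(k+1) := by rw [← pow_add, hmn]
    omega
  -- S j ⊆ I for j in the Ico
  have hin : ∀ j ∈ Finset.Ico b (b + 2^n), S j ⊆ I := by
    intro j hj x hx
    simp only [Finset.mem_Ico] at hj
    obtain ⟨hx1, hx2⟩ := hx
    rw [hI]
    constructor
    · have h1 : (2 * (b:ℝ)) * c ≤ (2 * (j:ℝ)) * c := by
        have : (b:ℝ) ≤ j := by exact_mod_cast hj.1
        nlinarith
      have h2 : (a:ℝ) * 2 ^ (-(m:ℤ)) = (2 * (b:ℝ)) * c := by
        rw [key, hb]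
        push_cast
        ring
      linarith
    · have h1 : (2 * (j:ℝ) + 1) * c ≤ (2 * ((b:ℝ) + 2^n)) * c := by
        have : (j:ℝ) + 1 ≤ (b:ℝ) + 2^n := by exact_mod_cast hj.2
        nlinarith
      have h2 : ((a:ℝ) + 1) * 2 ^ (-(m:ℤ)) = (2 * ((b:ℝ) + 2^n)) * c := by
        rw [key, hb]
        push_cast
        ring
      linarith
  -- S j ∩ I = ∅ for j outside
  have hout : ∀ j ∈ Finset.range (2^(k+1)), j ∉ Finset.Ico b (b + 2^n) → S j ∩ I = ∅ := by
    intro j _ hj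
    simp only [Finset.mem_Ico, not_and, not_lt, not_le] at hj
    rcases lt_or_ge j b with h | h
    · apply Set.eq_empty_of_forall_notMem
      rintro x ⟨⟨_, hx2⟩, hx3⟩
      rw [hI] at hx3
      obtain ⟨hx4, _⟩ := hx3
      have h1 : (2 * (j:ℝ) + 1) * c ≤ (2 * (b:ℝ)) * c := by
        have : (j:ℝ) + 1 ≤ (b:ℝ) := by exact_mod_cast h
        nlinarith
      have h2 : (a:ℝ) * 2 ^ (-(m:ℤ)) = (2 * (b:ℝ)) * c := by
        rw [key, hb]; push_cast; ring
      linarith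
    · have h := hj h
      apply Set.eq_empty_of_forall_notMem
      rintro x ⟨⟨hx1, _⟩, hx3⟩
      rw [hI] at hx3
      obtain ⟨_, hx4⟩ := hx3
      have h1 : (2 * ((b:ℝ) + 2^n)) * c ≤ (2 * (j:ℝ)) * c := by
        have : (b:ℝ) + 2^n ≤ (j:ℝ) := by exact_mod_cast h
        nlinarith
      have h2 : ((a:ℝ) + 1) * 2 ^ (-(m:ℤ)) = (2 * ((b:ℝ) + 2^n)) * c := by
        rw [key, hb]; push_cast; ring
      linarith
  -- rewrite intersection
  have hEk : Ek k ∩ I = ⋃ j ∈ Finset.range (2^(k+1)), (S j ∩ I) := by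
    rw [Ek]
    ext x
    simp only [Set.mem_inter_iff, Set.mem_iUnion, Set.mem_inter_iff]
    tauto
  rw [hEk]
  have hdisj : (↑(Finset.range (2^(k+1))) : Set ℕ).PairwiseDisjoint (fun j => S j ∩ I) := by
    intro i _ j _ hij
    apply Set.disjoint_left.mpr
    rintro x ⟨⟨hx1, hx2⟩, _⟩ ⟨⟨hy1, hy2⟩, _⟩
    rcases lt_or_gt_of_ne hij with h | h
    · have : (2 * (i:ℝ) + 1) ≤ 2 * (j:ℝ) := by
        have : (i:ℝ) + 1 ≤ (j:ℝ) := by exact_mod_cast h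
        linarith
      nlinarith
    · have : (2 * (j:ℝ) + 1) ≤ 2 * (i:ℝ) := by
        have : (j:ℝ) + 1 ≤ (i:ℝ) := by exact_mod_cast h
        linarith
      nlinarith
  rw [measure_biUnion_finset hdisj (fun j _ => (measurableSet_Ioo).inter (by rw [hI]; exact measurableSet_Ico))]
  rw [← Finset.sum_subset hsub (fun j hj hj' => by rw [hout j hj hj', measure_empty])]
  have hterm : ∀ j ∈ Finset.Ico b (b + 2^n), volume (S j ∩ I) = ENNReal.ofReal c := by
    intro j hj
    rw [Set.inter_eq_left.mpr (hin j hj), hS]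
    rw [Real.volume_Ioo]
    congr 1
    ring
  rw [Finset.sum_congr rfl hterm, Finset.sum_const, Nat.card_Ico]
  simp only [add_tsub_cancel_left, nsmul_eq_mul]
  rw [hvolI, key]
  rw [show (((2:ℕ)^n : ℕ) : ℝ≥0∞) = ENNReal.ofReal ((2:ℝ)^n) by
      rw [ENNReal.ofReal_pow (by norm_num)]; norm_num,
    ← ENNReal.ofReal_mul (by positivity)]
  rw [show ((2:ℝ≥0∞)) = ENNReal.ofReal 2 by simp, ← ENNReal.ofReal_div_of_pos two_pos]
  congr 1
  rw [pow_succ]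
  ring
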